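/- Convergence of the Markov-chain LP hierarchy: for every Δ > 1, b ≥ 1 and c₁, c₂ > 0, there exist constants C₁, C₂ > 0 (depending only on Δ, b, c₁, c₂) such that the following holds. Let G be a finite graph on n vertices with maximum degree at most Δ, let μ be the Gibbs distribution of a spin system on G, and let P be a local Markov chain satisfying sup over probability distributions ν₀ of ‖ν₀P^t - μ‖₁ ≤ c₁·n·(1-c₂/n)^t for all t ≥ 0. Then for every f : S → ℝ supported on a set B with |B| ≤ b and every Λ with B ⊆ Λ ⊆ V, max{ν(f) : ν ∈ LP_{Λ,MC}} - min{ν(f) : ν ∈ LP_{Λ,MC}} ≤ C₁·n·‖f‖_∞·e^{-C₂·dist(B,Λ^c)}. -/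

import Mathlib

/-!
Run the chain for `T ≈ n r / K` steps, `K = 2 (Δ + 1) e³`. By a Lieb–Robinson bound, after `s`
steps the influence of a site at distance `d` from `B` on `P^s f` is at most
`2 ‖f‖ (1 + K/n)^s e^{-3d}`, so up to an error exponentially small in `r` the observable `P^s f`
depends only on the spins in `Λ`. There the LP constraints make every feasible `ν` stationary,
whence `ν(f) ≈ ν(P^T f)`. Pushed forward to `Σ^V`, `ν` is a distribution, so by the mixing
hypothesis `ν(P^T f) ≈ μ(f)`. All LP values therefore lie within
`O(n² e^{-r} + n e^{-c₂ r / K}) ‖f‖` of `μ(f)`; the surplus factor `n` is absorbed by the trivial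
bound `2 ‖f‖` when `n > e^{r/2}`.
-/

namespace GibbsLP

variable {V : Type*} [Fintype V] [DecidableEq V]

/-- Spin configurations on the vertex set `V`; the two spin values `-1, +1` are
encoded by the two-element type `Bool`. -/
abbrev Config (V : Type*) := V → Bool

/-- The configuration `x` with the spin at site `i` flipped (denoted `xⁱ` in the paper). -/
def flip (x : Config V) (i : V) : Config V := Function.update x i (!x i)

/-- Discrete gradient `∇ᵢ f (x) = f(xⁱ) - f(x)`. -/
def grad (f : Config V → ℝ) (i : V) (x : Config V) : ℝ := f (flip x i) - f x

/-- `f` depends only on the spins in `Λ`, i.e. `supp f ⊆ Λ`. -/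
def SupportedOn (f : Config V → ℝ) (Λ : Set V) : Prop :=
  ∀ i ∉ Λ, ∀ x, f (flip x i) = f x

/-- The support `supp f = {i : ∇ᵢ f ≠ 0}` of an observable. -/
def sptSet (f : Config V → ℝ) : Set V := {i | ∃ x, f (flip x i) ≠ f x}

/-- Sup norm of an observable. -/
noncomputable def supNorm {α : Type*} (f : α → ℝ) : ℝ := ⨆ x, |f x|

/-- The Hamiltonian `H(x) = β ∑_{{i,j} ∈ E} h_{ij}(x_i, x_j)`; each unordered edge is
counted once (hence the factor `1/2` for the ordered double sum). -/
noncomputable def ham (G : SimpleGraph V) [DecidableRel G.Adj] (β : ℝ)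
    (h : V → V → Bool → Bool → ℝ) (x : Config V) : ℝ :=
  β * ((1 : ℝ) / 2 * ∑ i : V, ∑ j : V, if G.Adj i j then h i j (x i) (x j) else 0)

/-- The Gibbs distribution `μ(x) = e^{-H(x)} / Z`. -/
noncomputable def gibbs (H : Config V → ℝ) (x : Config V) : ℝ :=
  Real.exp (-H x) / ∑ y : Config V, Real.exp (-H y)

/-- `ν` is a probability distribution. -/
def IsDist {α : Type*} [Fintype α] (ν : α → ℝ) : Prop :=
  (∀ a, 0 ≤ ν a) ∧ ∑ a, ν a = 1

/-- Spin configurations on a subset `A ⊆ V`. -/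
abbrev SubConfig {V : Type*} (A : Finset V) := {i : V // i ∈ A} → Bool

/-- Restriction of a configuration to `A`. -/
def restrict (A : Finset V) (x : Config V) : SubConfig A := fun i => x i.1

/-- Extension of a configuration on `A` to all of `V` (by an arbitrary fixed value outside). -/
def extendC (A : Finset V) (y : SubConfig A) : Config V :=
  fun i => if h : i ∈ A then y ⟨i, h⟩ else true

/-- Flip the spin of `y : SubConfig A` at site `i` (identity if `i ∉ A`). -/
def flipAt (A : Finset V) (y : SubConfig A) (i : V) : SubConfig A :=
  fun j => if j.1 = i then !(y j) else y j

/-- External boundary `∂ᵉˣ Λ = {j ∉ Λ : ∃ i ∈ Λ, {i,j} ∈ E}`. -/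
def extBoundary (G : SimpleGraph V) [DecidableRel G.Adj] (Λ : Finset V) : Finset V :=
  Finset.univ.filter fun j => j ∉ Λ ∧ ∃ i ∈ Λ, G.Adj i j

/-- External boundary of a set of vertices (set version). -/
def extBoundarySet (G : SimpleGraph V) (A : Set V) : Set V :=
  {j | j ∉ A ∧ ∃ i ∈ A, G.Adj i j}

/-- `Λ̄ = Λ ∪ ∂ᵉˣ Λ`. -/
def closure (G : SimpleGraph V) [DecidableRel G.Adj] (Λ : Finset V) : Finset V :=
  Λ ∪ extBoundary G Λ

/-- `∇ᵢ H` evaluated on a configuration on `A` (well defined for `i ∈ Λ`, `A = Λ̄`, since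
then `∇ᵢ H` only depends on the spins in `Λ̄`). -/
noncomputable def gradH (A : Finset V) (H : Config V → ℝ) (i : V) (y : SubConfig A) : ℝ :=
  H (flip (extendC A y) i) - H (extendC A y)

/-- Expectation `ν(f)` of an observable `f` supported in `A` under a distribution `ν` on
`Σ^A`. -/
noncomputable def lexp {A : Finset V} (ν : SubConfig A → ℝ) (f : Config V → ℝ) : ℝ :=
  ∑ y : SubConfig A, ν y * f (extendC A y)

/-- The DLR linear program: distributions on `Σ^{Λ̄}` satisfying the local spin-flip
equations `ν(y) = ν(yⁱ) e^{∇ᵢH(y)}` for all `y` and `i ∈ Λ`. -/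
def LPdlr (G : SimpleGraph V) [DecidableRel G.Adj] (H : Config V → ℝ) (Λ : Finset V) :
    Set (SubConfig (closure G Λ) → ℝ) :=
  {ν | IsDist ν ∧ ∀ y, ∀ i ∈ Λ,
      ν y = ν (flipAt (closure G Λ) y i) * Real.exp (gradH (closure G Λ) H i y)}

/-- Values `ν(f)` over feasible points `ν` of the DLR linear program. -/
def dlrVals (G : SimpleGraph V) [DecidableRel G.Adj] (H : Config V → ℝ) (Λ : Finset V)
    (f : Config V → ℝ) : Set ℝ :=
  {t | ∃ ν ∈ LPdlr G H Λ, t = lexp ν f}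

/-- Marginal of a distribution `μ` on `Σ^V` on the sites in `A`. -/
noncomputable def marg (A : Finset V) (μ : Config V → ℝ) : SubConfig A → ℝ :=
  fun y => ∑ x : Config V, if restrict A x = y then μ x else 0

/-- The Hamiltonian truncated to `Λ` with boundary condition `η` on `∂ᵉˣ Λ`. -/
noncomputable def hamLoc (G : SimpleGraph V) [DecidableRel G.Adj] (β : ℝ)
    (h : V → V → Bool → Bool → ℝ) (Λ : Finset V)
    (η : SubConfig (extBoundary G Λ)) (x : SubConfig Λ) : ℝ :=
  β * ((1 : ℝ) / 2 * (∑ i ∈ Λ.attach, ∑ j ∈ Λ.attach,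
        if G.Adj i.1 j.1 then h i.1 j.1 (x i) (x j) else 0)
    + ∑ i ∈ Λ.attach, ∑ j ∈ (extBoundary G Λ).attach,
        if G.Adj i.1 j.1 then h i.1 j.1 (x i) (η j) else 0)

/-- The local Gibbs state `μ_Λ^η` on `Λ` with boundary condition `η`. -/
noncomputable def gibbsLoc (G : SimpleGraph V) [DecidableRel G.Adj] (β : ℝ)
    (h : V → V → Bool → Bool → ℝ) (Λ : Finset V)
    (η : SubConfig (extBoundary G Λ)) (x : SubConfig Λ) : ℝ :=
  Real.exp (-(hamLoc G β h Λ η x)) /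
    ∑ x' : SubConfig Λ, Real.exp (-(hamLoc G β h Λ η x'))

/-- Expectation `μ_Λ^η(f)` of an observable supported in `Λ` under the local Gibbs state. -/
noncomputable def gibbsLocExp (G : SimpleGraph V) [DecidableRel G.Adj] (β : ℝ)
    (h : V → V → Bool → Bool → ℝ) (Λ : Finset V)
    (η : SubConfig (extBoundary G Λ)) (f : Config V → ℝ) : ℝ :=
  ∑ x : SubConfig Λ, gibbsLoc G β h Λ η x * f (extendC Λ x)

/-- Combine `x ∈ Σ^Λ` and `η ∈ Σ^{∂ᵉˣΛ}` into a configuration `(x, η) ∈ Σ^{Λ̄}`. -/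
def glue (G : SimpleGraph V) [DecidableRel G.Adj] (Λ : Finset V)
    (x : SubConfig Λ) (η : SubConfig (extBoundary G Λ)) : SubConfig (closure G Λ) :=
  fun i => if h : i.1 ∈ Λ then x ⟨i.1, h⟩
    else η ⟨i.1, by
      have hi := i.2
      simp only [closure, Finset.mem_union] at hi
      tauto⟩

/-- A local (single-site, finite-range, bounded-rate) Markov chain on `Σ^V`. -/
structure IsLocalMC (G : SimpleGraph V) (P : Config V → Config V → ℝ) : Prop where
  nonneg : ∀ x x', 0 ≤ P x x'
  rowSum : ∀ x, ∑ x', P x x' = 1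
  /-- `P_{x,x'} = 0` if `x'` differs from `x` on more than one site. -/
  singleSite : ∀ x x', x' ≠ x → (∀ i, x' ≠ flip x i) → P x x' = 0
  /-- `P_{x,xⁱ}` only depends on the spins in the closed neighborhood of `i`. -/
  locality : ∀ i : V, ∀ x x' : Config V, x i = x' i →
      (∀ j, G.Adj i j → x j = x' j) → P x (flip x i) = P x' (flip x' i)
  /-- `P_{x,x'} ≤ 1/n` off the diagonal. -/
  bounded : ∀ x x', x ≠ x' → P x x' ≤ 1 / (Fintype.card V : ℝ)

/-- The Markov-chain linear program: distributions on `Σ^{Λ̄}` satisfying the stationarity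
equations `ν(Pg) = ν(g)` for all `g` supported on `Λ`. -/
def LPmc (G : SimpleGraph V) [DecidableRel G.Adj] (P : Config V → Config V → ℝ)
    (Λ : Finset V) : Set (SubConfig (closure G Λ) → ℝ) :=
  {ν | IsDist ν ∧ ∀ g : Config V → ℝ, SupportedOn g ↑Λ →
      lexp ν ((Matrix.of P).mulVec g) = lexp ν g}

/-- Values `ν(f)` over feasible points `ν` of the Markov-chain linear program. -/
def mcVals (G : SimpleGraph V) [DecidableRel G.Adj] (P : Config V → Config V → ℝ)
    (Λ : Finset V) (f : Config V → ℝ) : Set ℝ :=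
  {t | ∃ ν ∈ LPmc G P Λ, t = lexp ν f}

/-- The heat-bath dynamics: site `i` is flipped with probability
`c(i,x) = e^{-∇ᵢH(x)} / (1 + e^{-∇ᵢH(x)})`, each site being selected with probability `1/n`. -/
noncomputable def heatBath (H : Config V → ℝ) (x x' : Config V) : ℝ :=
  if x' = x then
    1 - (∑ i : V, Real.exp (-(grad H i x)) / (1 + Real.exp (-(grad H i x)))) /
      (Fintype.card V : ℝ)
  else
    ∑ i : V, if x' = flip x i then
      (Real.exp (-(grad H i x)) / (1 + Real.exp (-(grad H i x)))) / (Fintype.card V : ℝ)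
    else 0

/-- Marginal on `Σ^A` of a distribution on `Σ^B`, for `A ⊆ B`. -/
noncomputable def margTo {A B : Finset V} (hAB : A ⊆ B) (ν : SubConfig B → ℝ) :
    SubConfig A → ℝ :=
  fun z => ∑ y : SubConfig B,
    if (fun i : {i : V // i ∈ A} => y ⟨i.1, hAB i.2⟩) = z then ν y else 0

theorem closure_mono (G : SimpleGraph V) [DecidableRel G.Adj] {Λ Λ' : Finset V}
    (hs : Λ ⊆ Λ') : closure G Λ ⊆ closure G Λ' := by
  intro j hj
  simp only [closure, Finset.mem_union, extBoundary, Finset.mem_filter, Finset.mem_univ,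
    true_and] at hj ⊢
  by_cases hjΛ' : j ∈ Λ'
  · exact Or.inl hjΛ'
  · rcases hj with hj | ⟨hjn, i, hiΛ, hadj⟩
    · exact absurd (hs hj) hjΛ'
    · exact Or.inr ⟨hjΛ', i, hs hiΛ, hadj⟩

end GibbsLP

namespace GibbsLP

section Flip

variable {V : Type*} [DecidableEq V]

@[simp]
lemma flip_apply_self (x : Config V) (i : V) : flip x i i = !x i := by
  simp [flip]

lemma flip_apply_of_ne (x : Config V) {i j : V} (h : j ≠ i) : flip x i j = x j :=
  Function.update_of_ne h _ _

lemma flip_comm (x : Config V) (i j : V) : flip (flip x j) i = flip (flip x i) j := by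
  rcases eq_or_ne i j with rfl | h
  · rfl
  · simp only [flip, Function.update_of_ne h, Function.update_of_ne h.symm,
      Function.update_comm h.symm]

lemma flip_ne (x : Config V) (i : V) : flip x i ≠ x := fun h => by
  simpa using congrFun h i

lemma flip_injective (x : Config V) : Function.Injective (flip x) := fun i i' h => by
  by_contra hne
  simpa [flip_apply_of_ne x hne] using congrFun h i

lemma grad_flip_sub_grad (g : Config V → ℝ) (x : Config V) (i j : V) :
    grad g i (flip x j) - grad g i x = grad g j (flip x i) - grad g j x := by
  simp only [grad, flip_comm x i j]
  ring

lemma abs_sub_update_le {g : Config V → ℝ} {a : V} {w : ℝ}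
    (hw : ∀ x, |grad g a x| ≤ w) (x : Config V) (b : Bool) :
    |g x - g (Function.update x a b)| ≤ w := by
  rcases Bool.eq_or_eq_not b (x a) with rfl | rfl
  · simpa using (abs_nonneg _).trans (hw x)
  · exact abs_sub_comm (g x) _ ▸ hw x

/-- Telescoping along a path that flips the sites of `D` one at a time. -/
lemma abs_sub_le_sum_of_abs_grad_le {g : Config V → ℝ} {w : V → ℝ} (D : Finset V)
    (hw : ∀ j ∈ D, ∀ x, |grad g j x| ≤ w j) (x y : Config V)
    (hxy : ∀ j, x j ≠ y j → j ∈ D) : |g x - g y| ≤ ∑ j ∈ D, w j := by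
  induction D using Finset.induction_on generalizing x with
  | empty =>
    obtain rfl : x = y := funext fun j => by_contra fun h => by simpa using hxy j h
    simp
  | @insert a D ha ih =>
    set x' := Function.update x a (y a)
    have hx' : ∀ j, x' j ≠ y j → j ∈ D := fun j hj => by
      rcases eq_or_ne j a with rfl | hja
      · simp [x'] at hj
      · simp only [x', Function.update_of_ne hja] at hj
        exact (Finset.mem_insert.mp (hxy j hj)).resolve_left hja
    rw [Finset.sum_insert ha]
    calc |g x - g y| ≤ |g x - g x'| + |g x' - g y| := abs_sub_le _ _ _
      _ ≤ w a + ∑ j ∈ D, w j := add_le_add (abs_sub_update_le (hw a (by simp)) x (y a))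
          (ih (fun j hj => hw j (Finset.mem_insert_of_mem hj)) x' hx')

end Flip

lemma abs_le_supNorm {α : Type*} [Finite α] (f : α → ℝ) (x : α) : |f x| ≤ supNorm f :=
  le_ciSup (f := fun x => |f x|) (Set.finite_range _).bddAbove x

lemma supNorm_nonneg {α : Type*} [Finite α] [Nonempty α] (f : α → ℝ) : 0 ≤ supNorm f :=
  (abs_nonneg _).trans (abs_le_supNorm f (Classical.arbitrary α))

lemma abs_sum_mul_le {ι : Type*} [Fintype ι] {p u : ι → ℝ} {C : ℝ} (hp : ∀ i, 0 ≤ p i)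
    (hp1 : ∑ i, p i = 1) (hu : ∀ i, |u i| ≤ C) : |∑ i, p i * u i| ≤ C :=
  calc |∑ i, p i * u i| ≤ ∑ i, p i * C := by
        refine (Finset.abs_sum_le_sum_abs _ _).trans (Finset.sum_le_sum fun i _ => ?_)
        rw [abs_mul, abs_of_nonneg (hp i)]
        exact mul_le_mul_of_nonneg_left (hu i) (hp i)
    _ = C := by rw [← Finset.sum_mul, hp1, one_mul]

lemma abs_dotProduct_sub_le {ι : Type*} [Fintype ι] (ρ μ g : ι → ℝ) {F : ℝ}
    (hF : ∀ x, |g x| ≤ F) : |ρ ⬝ᵥ g - μ ⬝ᵥ g| ≤ (∑ x, |ρ x - μ x|) * F := by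
  rw [← sub_dotProduct, Finset.sum_mul]
  refine (Finset.abs_sum_le_sum_abs _ _).trans (Finset.sum_le_sum fun x _ => ?_)
  rw [abs_mul]
  exact mul_le_mul_of_nonneg_left (hF x) (abs_nonneg _)

lemma abs_add_sum_mul_sub_le {ι : Type*} (s : Finset ι) {q v : ι → ℝ} {u a : ℝ}
    (hq : ∀ i ∈ s, 0 ≤ q i) (hq1 : ∑ i ∈ s, q i ≤ 1) (hu : |u| ≤ a) (hv : ∀ i ∈ s, |v i| ≤ a) :
    |u + ∑ i ∈ s, q i * (v i - u)| ≤ a := by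
  have hq1' : 0 ≤ 1 - ∑ i ∈ s, q i := sub_nonneg.2 hq1
  have hconvex : u + ∑ i ∈ s, q i * (v i - u) = (1 - ∑ i ∈ s, q i) * u + ∑ i ∈ s, q i * v i := by
    simp only [mul_sub, Finset.sum_sub_distrib, ← Finset.sum_mul]
    ring
  calc |u + ∑ i ∈ s, q i * (v i - u)|
      ≤ (1 - ∑ i ∈ s, q i) * a + ∑ i ∈ s, q i * a := by
        rw [hconvex]
        refine (abs_add_le _ _).trans (add_le_add ?_ ((Finset.abs_sum_le_sum_abs _ _).trans
          (Finset.sum_le_sum fun i hi => ?_)))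
        · rw [abs_mul, abs_of_nonneg hq1']
          exact mul_le_mul_of_nonneg_left hu hq1'
        · rw [abs_mul, abs_of_nonneg (hq i hi)]
          exact mul_le_mul_of_nonneg_left (hv i hi) (hq i hi)
    _ = a := by rw [← Finset.sum_mul]; ring

lemma natCast_le_edist_of_adj {V : Type*} {G : SimpleGraph V} {b i j : V} {d : ℕ}
    (hd : ((d + 1 : ℕ) : ℕ∞) ≤ G.edist b j) (hij : i = j ∨ G.Adj j i) :
    (d : ℕ∞) ≤ G.edist b i := by
  rcases hij with rfl | hadj
  · exact le_trans (by exact_mod_cast d.le_succ) hd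
  · have h := hd.trans (G.edist_triangle (v := i))
    rw [SimpleGraph.edist_eq_one_iff_adj.2 hadj.symm, Nat.cast_succ] at h
    exact (ENat.add_le_add_iff_right ENat.one_ne_top).1 h

section MarkovChain

variable {V : Type*} [Fintype V] [DecidableEq V] {G : SimpleGraph V}
  {P : Config V → Config V → ℝ}

lemma mulVec_of_apply (g : Config V → ℝ) (x : Config V) :
    (Matrix.of P).mulVec g x = ∑ x', P x x' * g x' := rfl

lemma abs_mulVec_le (hP : IsLocalMC G P) {g : Config V → ℝ} {C : ℝ}
    (hC : ∀ x, |g x| ≤ C) (x : Config V) : |(Matrix.of P).mulVec g x| ≤ C :=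
  abs_sum_mul_le (hP.nonneg x) (hP.rowSum x) hC

lemma abs_pow_mulVec_le (hP : IsLocalMC G P) {g : Config V → ℝ} {C : ℝ}
    (hC : ∀ x, |g x| ≤ C) (s : ℕ) (x : Config V) : |(Matrix.of P ^ s).mulVec g x| ≤ C := by
  induction s generalizing x with
  | zero => simpa using hC x
  | succ s ih =>
    rw [pow_succ', ← Matrix.mulVec_mulVec]
    exact abs_mulVec_le hP ih x

lemma sum_flip_le_one (hP : IsLocalMC G P) (x : Config V) : ∑ i, P x (flip x i) ≤ 1 := by
  rw [← Finset.sum_image fun i _ i' _ h => flip_injective x h, ← hP.rowSum x]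
  exact Finset.sum_le_sum_of_subset_of_nonneg (Finset.subset_univ _)
    fun x' _ _ => hP.nonneg x x'

lemma mulVec_eq_add_sum_grad (hP : IsLocalMC G P) (g : Config V → ℝ) (x : Config V) :
    (Matrix.of P).mulVec g x = g x + ∑ i, P x (flip x i) * grad g i x := by
  have hsum : ∑ i, P x (flip x i) * grad g i x = ∑ x', P x x' * (g x' - g x) := by
    simp only [grad]
    rw [← Finset.sum_image (f := fun x' => P x x' * (g x' - g x))
      fun i _ i' _ h => flip_injective x h]
    refine Finset.sum_subset (Finset.subset_univ _) fun x' _ hx' => ?_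
    rcases eq_or_ne x' x with rfl | hne
    · simp
    · rw [hP.singleSite x x' hne fun i hi => hx' (hi ▸ Finset.mem_image_of_mem _
        (Finset.mem_univ i)), zero_mul]
  rw [hsum, mulVec_of_apply]
  simp only [mul_sub, Finset.sum_sub_distrib, ← Finset.sum_mul, hP.rowSum, one_mul]
  ring

lemma rate_flip_flip_eq (hP : IsLocalMC G P) {i j : V} (hij : i ≠ j) (hadj : ¬G.Adj i j)
    (x : Config V) : P (flip x j) (flip (flip x j) i) = P x (flip x i) :=
  hP.locality i _ x (flip_apply_of_ne x hij) fun _ hk =>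
    flip_apply_of_ne x fun hkj => hadj (hkj ▸ hk)

end MarkovChain

section LiebRobinson

variable {V : Type*} [Fintype V] [DecidableEq V] {G : SimpleGraph V} [DecidableRel G.Adj]
  {P : Config V → Config V → ℝ}

/-- Away from the closed neighbourhood `N` of `j` the chain commutes with `∇ⱼ`, so those sites
only average `∇ⱼ g`; each site of `N` contributes at most `2c/n`. -/
lemma abs_grad_mulVec_le (hP : IsLocalMC G P) {g : Config V → ℝ} {j : V} {a c : ℝ}
    (ha : ∀ x, |grad g j x| ≤ a) (hc : ∀ i, (i = j ∨ G.Adj j i) → ∀ x, |grad g i x| ≤ c)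
    (x : Config V) :
    |grad ((Matrix.of P).mulVec g) j x| ≤
      a + 2 * (G.degree j + 1) / Fintype.card V * c := by
  set N := insert j (G.neighborFinset j)
  set n : ℝ := (Fintype.card V : ℝ)
  have hc0 : 0 ≤ c := (abs_nonneg _).trans (hc j (Or.inl rfl) x)
  set D : V → ℝ := fun i =>
    P (flip x j) (flip (flip x j) i) * grad g i (flip x j) - P x (flip x i) * grad g i x
  have hfar : ∀ i ∈ Nᶜ, D i = P x (flip x i) * (grad g j (flip x i) - grad g j x) := by
    intro i hi
    simp only [N, Finset.mem_compl, Finset.mem_insert, SimpleGraph.mem_neighborFinset,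
      not_or] at hi
    simp only [D, rate_flip_flip_eq hP hi.1 (fun h => hi.2 h.symm)]
    rw [← mul_sub, grad_flip_sub_grad]
  have hnear : ∀ i ∈ N, |D i| ≤ 2 / n * c := by
    intro i hi
    have hci := hc i (by simpa [N] using hi)
    have hrate : ∀ y, |P y (flip y i) * grad g i y| ≤ 1 / n * c := fun y => by
      rw [abs_mul, abs_of_nonneg (hP.nonneg _ _)]
      exact mul_le_mul (hP.bounded _ _ (flip_ne y i).symm) (hci y) (abs_nonneg _)
        (by positivity)
    calc |D i| ≤ 1 / n * c + 1 / n * c := (abs_sub _ _).trans (add_le_add (hrate _) (hrate _))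
      _ = 2 / n * c := by ring
  have hfar_sum : ∑ i ∈ Nᶜ, P x (flip x i) ≤ 1 :=
    (Finset.sum_le_sum_of_subset_of_nonneg (Finset.subset_univ _)
      fun _ _ _ => hP.nonneg _ _).trans (sum_flip_le_one hP x)
  have hdecomp : grad ((Matrix.of P).mulVec g) j x =
      (grad g j x + ∑ i ∈ Nᶜ, P x (flip x i) * (grad g j (flip x i) - grad g j x)) +
        ∑ i ∈ N, D i := by
    rw [← Finset.sum_congr rfl hfar, add_assoc, add_comm (∑ i ∈ Nᶜ, D i),
      Finset.sum_add_sum_compl]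
    simp only [D, grad, mulVec_eq_add_sum_grad hP, Finset.sum_sub_distrib]
    ring
  have hcard : (N.card : ℝ) ≤ G.degree j + 1 := by
    exact_mod_cast (Finset.card_insert_le _ _).trans_eq (by rw [G.card_neighborFinset_eq_degree])
  calc |grad ((Matrix.of P).mulVec g) j x|
      ≤ a + ∑ i ∈ N, 2 / n * c := by
        rw [hdecomp]
        exact (abs_add_le _ _).trans (add_le_add
          (abs_add_sum_mul_sub_le _ (fun _ _ => hP.nonneg _ _) hfar_sum (ha x) fun _ _ => ha _)
          ((Finset.abs_sum_le_sum_abs _ _).trans (Finset.sum_le_sum hnear)))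
    _ ≤ a + (G.degree j + 1) * (2 / n * c) := by
        rw [Finset.sum_const, nsmul_eq_mul]
        gcongr
    _ = a + 2 * (G.degree j + 1) / n * c := by ring

theorem abs_grad_pow_mulVec_le {Δ : ℕ} (hdeg : ∀ v, G.degree v ≤ Δ) (hP : IsLocalMC G P)
    {B : Finset V} {f : Config V → ℝ} (hf : SupportedOn f ↑B) {F : ℝ} (hF : ∀ x, |f x| ≤ F)
    {γ K : ℝ} (hγ : 0 < γ) (hK : 2 * (Δ + 1) ≤ K * γ) (s : ℕ) (j : V) (d : ℕ)
    (hd : ∀ i ∈ B, (d : ℕ∞) ≤ G.edist i j) (x : Config V) :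
    |grad ((Matrix.of P ^ s).mulVec f) j x| ≤
      2 * F * (1 + K / Fintype.card V) ^ s * γ ^ d := by
  set n : ℝ := (Fintype.card V : ℝ)
  have hF0 : 0 ≤ F := (abs_nonneg _).trans (hF x)
  have hK0 : 0 < K :=
    pos_of_mul_pos_left ((by positivity : (0 : ℝ) < 2 * (Δ + 1)).trans_le hK) hγ.le
  have hα : 1 ≤ 1 + K / n := le_add_of_nonneg_right (by positivity)
  have hgrad_le : ∀ g : Config V → ℝ, (∀ y, |g y| ≤ F) → ∀ i y, |grad g i y| ≤ 2 * F :=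
    fun g hg i y => (abs_sub _ _).trans (by linarith [hg (flip y i), hg y])
  induction s generalizing j d x with
  | zero =>
    rw [pow_zero, Matrix.one_mulVec]
    cases d with
    | zero => simpa using hgrad_le f hF j x
    | succ d =>
      have hj : j ∉ B := fun hj => by simpa using hd j hj
      simp only [grad, hf j (by simpa using hj) x, sub_self, abs_zero]
      positivity
  | succ s ih =>
    rw [pow_succ', ← Matrix.mulVec_mulVec]
    cases d with
    | zero =>
      calc _ ≤ 2 * F := hgrad_le _ (abs_mulVec_le hP (abs_pow_mulVec_le hP hF s)) j x
        _ ≤ 2 * F * (1 + K / n) ^ (s + 1) * γ ^ 0 := by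
          rw [pow_zero, mul_one]
          exact le_mul_of_one_le_right (by positivity) (one_le_pow₀ hα)
    | succ d =>
      have hdeg' : 2 * ((G.degree j : ℝ) + 1) ≤ K * γ :=
        le_trans (by gcongr; exact_mod_cast hdeg j) hK
      calc _ ≤ 2 * F * (1 + K / n) ^ s * γ ^ (d + 1) +
            2 * (G.degree j + 1) / n * (2 * F * (1 + K / n) ^ s * γ ^ d) :=
          abs_grad_mulVec_le hP (ih j (d + 1) hd) (fun i hi => ih i d
            fun b hb => natCast_le_edist_of_adj (hd b hb) hi) x
        _ ≤ 2 * F * (1 + K / n) ^ s * γ ^ (d + 1) +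
            K * γ / n * (2 * F * (1 + K / n) ^ s * γ ^ d) := by gcongr
        _ = 2 * F * (1 + K / n) ^ (s + 1) * γ ^ (d + 1) := by ring

end LiebRobinson
section Estimates

open Real

lemma sSup_sub_sInf_le_two_mul {S : Set ℝ} {m ε : ℝ} (hε : 0 ≤ ε)
    (h : ∀ v ∈ S, |v - m| ≤ ε) : sSup S - sInf S ≤ 2 * ε := by
  rcases S.eq_empty_or_nonempty with rfl | hne
  · simpa [Real.sSup_empty, Real.sInf_empty] using hε
  · have hsup : sSup S ≤ m + ε := csSup_le hne fun v hv => by linarith [(abs_le.1 (h v hv)).2]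
    have hinf : m - ε ≤ sInf S := le_csInf hne fun v hv => by linarith [(abs_le.1 (h v hv)).1]
    linarith

lemma le_two_mul_add_of_le_two_mul_sq {X a F s Y : ℝ} (ha : 1 ≤ a) (hF : 0 ≤ F) (hs : 0 ≤ s)
    (hY : 0 ≤ Y) (h₁ : X ≤ 2 * F) (h₂ : X ≤ 2 * (a * F * s ^ 2 + Y)) :
    X ≤ 2 * (a * F * s + Y) := by
  have haF : 0 ≤ a * F := by positivity
  rcases le_total s 1 with hs1 | hs1
  · nlinarith [mul_le_mul_of_nonneg_left (by nlinarith : s ^ 2 ≤ s) haF]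
  · nlinarith [mul_le_mul_of_nonneg_left hs1 haF]

lemma one_sub_div_pow_le_exp {c n K : ℝ} (hc : 0 ≤ c) (hn : 0 < n) (hK : 0 < K)
    (h : 0 ≤ 1 - c / n) {r T : ℕ} (hT : n * r / K ≤ T) :
    (1 - c / n) ^ T ≤ exp (-(c / K) * r) := by
  have hcr : c / K * r = n * r / K * (c / n) := by field_simp
  calc (1 - c / n) ^ T ≤ exp (-(c / n)) ^ T := pow_le_pow_left₀ h (one_sub_le_exp_neg _) T
    _ = exp (T * -(c / n)) := (exp_nat_mul _ _).symm
    _ ≤ exp (-(c / K) * r) := by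
      rw [exp_le_exp, neg_mul, mul_neg, neg_le_neg_iff, hcr]
      exact mul_le_mul_of_nonneg_right hT (by positivity)

/-- The growth `(1 + K/n) ^ T ≤ e ^ (K + r)` of the Lieb–Robinson bound and the factor
`T ≤ n e ^ r` each use up one of the three factors `e⁻¹` per unit of distance. -/
lemma truncation_error_le {K n F : ℝ} (hK : 1 ≤ K) (hn : 1 ≤ n) (hF : 0 ≤ F) {r T : ℕ}
    (hT : (T : ℝ) ≤ n * r / K + 1) :
    4 * T * n * F * (1 + K / n) ^ T * exp (-3) ^ r ≤ 4 * exp K * F * (n * exp (-(r / 2))) ^ 2 := by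
  have hn0 : 0 < n := by linarith
  have hK0 : 0 < K := by linarith
  have hTn : (T : ℝ) ≤ n * exp r :=
    calc (T : ℝ) ≤ n * r + n := hT.trans (add_le_add (div_le_self (by positivity) hK) hn)
      _ ≤ n * exp r := by nlinarith [add_one_le_exp (r : ℝ)]
  have hTK : T * (K / n) ≤ K + r := by
    have hmul := mul_le_mul_of_nonneg_right hT (by positivity : 0 ≤ K / n)
    have hsimp : (n * r / K + 1) * (K / n) = r + K / n := by field_simp
    linarith [div_le_self hK0.le hn]
  have hpow : (1 + K / n) ^ T ≤ exp K * exp r :=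
    calc (1 + K / n) ^ T ≤ exp (K / n) ^ T :=
          pow_le_pow_left₀ (by positivity) (by linarith [add_one_le_exp (K / n)]) T
      _ = exp (T * (K / n)) := (exp_nat_mul _ _).symm
      _ ≤ exp K * exp r := by rw [← exp_add]; exact exp_le_exp.2 hTK
  have hexp : exp r * exp r * exp (-3) ^ r = exp (-(r / 2)) ^ 2 := by
    rw [← exp_nat_mul, ← exp_nat_mul, ← exp_add, ← exp_add]
    congr 1
    push_cast
    ring
  calc 4 * T * n * F * (1 + K / n) ^ T * exp (-3) ^ r
      ≤ 4 * (n * exp r) * n * F * (exp K * exp r) * exp (-3) ^ r := by gcongr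
    _ = 4 * exp K * F * (n * exp (-(r / 2))) ^ 2 := by
      linear_combination (4 * exp K * F * n ^ 2) * hexp

end Estimates
section LocalExpectation

variable {V : Type*} [DecidableEq V]

lemma lexp_add {A : Finset V} (ν : SubConfig A → ℝ) (u v : Config V → ℝ) :
    lexp ν (u + v) = lexp ν u + lexp ν v := by
  simp only [lexp, Pi.add_apply, mul_add, Finset.sum_add_distrib]

lemma abs_lexp_le {A : Finset V} {ν : SubConfig A → ℝ} (hν : IsDist ν) {g : Config V → ℝ}
    {C : ℝ} (hC : ∀ x, |g x| ≤ C) : |lexp ν g| ≤ C :=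
  abs_sum_mul_le hν.1 hν.2 fun _ => hC _

lemma supportedOn_comp_extendC_restrict (Λ : Finset V) (g : Config V → ℝ) :
    SupportedOn (fun x => g (extendC Λ (restrict Λ x))) ↑Λ := fun i hi x => by
  have : restrict Λ (flip x i) = restrict Λ x :=
    funext fun j => flip_apply_of_ne x fun h => hi (h ▸ j.2)
  simp only [this]

end LocalExpectation

section LinearProgram

variable {V : Type*} [Fintype V] [DecidableEq V]

lemma abs_sub_comp_extendC_restrict_le {Λ : Finset V} {g : Config V → ℝ} {ε : ℝ}
    (hε : ∀ j ∉ Λ, ∀ x, |grad g j x| ≤ ε) (x : Config V) :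
    |g x - g (extendC Λ (restrict Λ x))| ≤ Λᶜ.card * ε := by
  simpa using abs_sub_le_sum_of_abs_grad_le Λᶜ (w := fun _ => ε)
    (fun j hj => hε j (Finset.mem_compl.1 hj)) x _
    fun j hj => Finset.mem_compl.2 fun hjΛ => hj (by simp [extendC, restrict, hjΛ])

noncomputable def extendDist (A : Finset V) (ν : SubConfig A → ℝ) (x : Config V) : ℝ :=
  ∑ y, if extendC A y = x then ν y else 0

lemma IsDist.extendDist {A : Finset V} {ν : SubConfig A → ℝ} (hν : IsDist ν) :
    IsDist (extendDist A ν) := by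
  refine ⟨fun x => Finset.sum_nonneg fun y _ => ?_, ?_⟩
  · split_ifs
    exacts [hν.1 y, le_rfl]
  · simp only [GibbsLP.extendDist]
    rw [Finset.sum_comm]
    simpa using hν.2

lemma lexp_eq_extendDist_dotProduct {A : Finset V} (ν : SubConfig A → ℝ) (g : Config V → ℝ) :
    lexp ν g = extendDist A ν ⬝ᵥ g := by
  simp only [lexp, extendDist, dotProduct, Finset.sum_mul, ite_mul, zero_mul]
  rw [Finset.sum_comm]
  simp

variable {G : SimpleGraph V} [DecidableRel G.Adj] {P : Config V → Config V → ℝ}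
  {Λ : Finset V} {ν : SubConfig (closure G Λ) → ℝ}

/-- A feasible point of the LP is stationary for the part of `g` that sees only `Λ`, so it
moves only by the truncation error. -/
lemma abs_lexp_mulVec_sub_le (hP : IsLocalMC G P) (hν : ν ∈ LPmc G P Λ) {g : Config V → ℝ}
    {ε : ℝ} (hε : ∀ x, |g x - g (extendC Λ (restrict Λ x))| ≤ ε) :
    |lexp ν ((Matrix.of P).mulVec g) - lexp ν g| ≤ 2 * ε := by
  set e : Config V → ℝ := fun x => g x - g (extendC Λ (restrict Λ x))
  have hg : g = e + fun x => g (extendC Λ (restrict Λ x)) := by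
    ext x
    simp [e]
  rw [hg, Matrix.mulVec_add, lexp_add, lexp_add,
    hν.2 _ (supportedOn_comp_extendC_restrict Λ g)]
  calc _ = |lexp ν ((Matrix.of P).mulVec e) - lexp ν e| := by ring_nf
    _ ≤ ε + ε := (abs_sub _ _).trans
        (add_le_add (abs_lexp_le hν.1 (abs_mulVec_le hP hε)) (abs_lexp_le hν.1 hε))
    _ = 2 * ε := (two_mul ε).symm

lemma abs_lexp_pow_mulVec_sub_le (hP : IsLocalMC G P) (hν : ν ∈ LPmc G P Λ)
    {f : Config V → ℝ} {ε : ℝ} (T : ℕ)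
    (hε : ∀ s < T, ∀ x, |(Matrix.of P ^ s).mulVec f x -
      (Matrix.of P ^ s).mulVec f (extendC Λ (restrict Λ x))| ≤ ε) :
    |lexp ν ((Matrix.of P ^ T).mulVec f) - lexp ν f| ≤ 2 * T * ε := by
  induction T with
  | zero => simp
  | succ T ih =>
    rw [pow_succ', ← Matrix.mulVec_mulVec]
    calc _ ≤ |lexp ν ((Matrix.of P).mulVec ((Matrix.of P ^ T).mulVec f)) -
            lexp ν ((Matrix.of P ^ T).mulVec f)| +
          |lexp ν ((Matrix.of P ^ T).mulVec f) - lexp ν f| := abs_sub_le _ _ _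
      _ ≤ 2 * ε + 2 * T * ε := add_le_add (abs_lexp_mulVec_sub_le hP hν (hε T T.lt_succ_self))
          (ih fun s hs => hε s (hs.trans T.lt_succ_self))
      _ = 2 * (T + 1 : ℕ) * ε := by push_cast; ring

theorem abs_lexp_sub_dotProduct_le {Δ : ℕ} (hdeg : ∀ v, G.degree v ≤ Δ) (hP : IsLocalMC G P)
    (hν : ν ∈ LPmc G P Λ) {B : Finset V} {f : Config V → ℝ} (hf : SupportedOn f ↑B) {F : ℝ}
    (hF : ∀ x, |f x| ≤ F) {γ K : ℝ} (hγ : 0 < γ) (hK : 2 * (Δ + 1) ≤ K * γ) {r : ℕ}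
    (hr : ∀ i ∈ B, ∀ j ∉ Λ, (r : ℕ∞) ≤ G.edist i j) {μ : Config V → ℝ} {T : ℕ} {m : ℝ}
    (hmix : ∀ ν₀, IsDist ν₀ → ∑ x', |(Matrix.vecMul ν₀ (Matrix.of P ^ T)) x' - μ x'| ≤ m) :
    |lexp ν f - μ ⬝ᵥ f| ≤
      4 * T * Fintype.card V * F * (1 + K / Fintype.card V) ^ T * γ ^ r + m * F := by
  set n : ℝ := (Fintype.card V : ℝ)
  have hF0 : 0 ≤ F := (abs_nonneg _).trans (hF fun _ => true)
  have hK0 : 0 < K :=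
    pos_of_mul_pos_left ((by positivity : (0 : ℝ) < 2 * (Δ + 1)).trans_le hK) hγ.le
  have htrunc : ∀ s < T, ∀ x, |(Matrix.of P ^ s).mulVec f x -
      (Matrix.of P ^ s).mulVec f (extendC Λ (restrict Λ x))| ≤
        n * (2 * F * (1 + K / n) ^ T * γ ^ r) := by
    intro s hs x
    refine (abs_sub_comp_extendC_restrict_le (ε := 2 * F * (1 + K / n) ^ T * γ ^ r)
      (fun j hj y =>
      (abs_grad_pow_mulVec_le hdeg hP hf hF hγ hK s j r (fun i hi => hr i hi j hj) y).trans
        ?_) x).trans ?_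
    · gcongr
      exact le_add_of_nonneg_right (by positivity)
    · gcongr
      exact Nat.cast_le.2 (Finset.card_le_univ Λᶜ)
  have hmixed : |lexp ν ((Matrix.of P ^ T).mulVec f) - μ ⬝ᵥ f| ≤ m * F := by
    rw [lexp_eq_extendDist_dotProduct, Matrix.dotProduct_mulVec]
    exact (abs_dotProduct_sub_le _ _ _ hF).trans
      (mul_le_mul_of_nonneg_right (hmix _ hν.1.extendDist) hF0)
  calc |lexp ν f - μ ⬝ᵥ f|
      ≤ |lexp ν ((Matrix.of P ^ T).mulVec f) - lexp ν f| +
        |lexp ν ((Matrix.of P ^ T).mulVec f) - μ ⬝ᵥ f| :=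
        (abs_sub_le _ _ _).trans_eq (by rw [abs_sub_comm (lexp ν f)])
    _ ≤ 2 * T * (n * (2 * F * (1 + K / n) ^ T * γ ^ r)) + m * F :=
        add_le_add (abs_lexp_pow_mulVec_sub_le hP hν T htrunc) hmixed
    _ = 4 * T * n * F * (1 + K / n) ^ T * γ ^ r + m * F := by ring

theorem abs_lexp_sub_dotProduct_le_exp [Nonempty V] {Δ : ℕ} (hdeg : ∀ v, G.degree v ≤ Δ)
    (hP : IsLocalMC G P) (hν : ν ∈ LPmc G P Λ) {B : Finset V} {f : Config V → ℝ}
    (hf : SupportedOn f ↑B) {F : ℝ} (hF : ∀ x, |f x| ≤ F) {r : ℕ}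
    (hr : ∀ i ∈ B, ∀ j ∉ Λ, (r : ℕ∞) ≤ G.edist i j) {μ : Config V → ℝ} {c₁ c₂ K : ℝ}
    (hc₁ : 0 < c₁) (hc₂ : 0 ≤ c₂) (hK : 2 * (Δ + 1) * Real.exp 3 ≤ K)
    (hmix : ∀ (t : ℕ) ν₀, IsDist ν₀ → ∑ x', |Matrix.vecMul ν₀ (Matrix.of P ^ t) x' - μ x'| ≤
      c₁ * Fintype.card V * (1 - c₂ / Fintype.card V) ^ t) :
    |lexp ν f - μ ⬝ᵥ f| ≤
      4 * Real.exp K * F * (Fintype.card V * Real.exp (-(r / 2))) ^ 2 +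
        c₁ * Fintype.card V * F * Real.exp (-(c₂ / K) * r) := by
  set n : ℝ := (Fintype.card V : ℝ)
  have hn : 1 ≤ n := Nat.one_le_cast.2 Fintype.card_pos
  have hK1 : 1 ≤ K :=
    le_trans (by nlinarith [Real.add_one_le_exp 3, (Nat.cast_nonneg Δ : (0 : ℝ) ≤ Δ)]) hK
  have hF0 : 0 ≤ F := (abs_nonneg _).trans (hF fun _ => true)
  have hc : 0 ≤ 1 - c₂ / n := by
    have h := (Finset.sum_nonneg fun _ _ => abs_nonneg _).trans (hmix 1 _ hν.1.extendDist)
    exact nonneg_of_mul_nonneg_right (by simpa using h) (by positivity)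
  refine (abs_lexp_sub_dotProduct_le hdeg hP hν hf hF (K := K) (Real.exp_pos (-3)) ?_ hr
    (hmix ⌈n * r / K⌉₊)).trans (add_le_add ?_ ?_)
  · calc 2 * ((Δ : ℝ) + 1) = 2 * (Δ + 1) * Real.exp 3 * Real.exp (-3) := by
          rw [mul_assoc, ← Real.exp_add]; simp
      _ ≤ K * Real.exp (-3) := by gcongr
  · exact truncation_error_le hK1 hn hF0 (Nat.ceil_lt_add_one (by positivity)).le
  · rw [mul_right_comm]
    gcongr
    exact one_sub_div_pow_le_exp hc₂ (by positivity) (by positivity) hc (Nat.le_ceil _)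

end LinearProgram

theorem LPmc_convergence_general (Δ b : ℕ)
    (c₁ c₂ : ℝ) (hc₁ : 0 < c₁) (hc₂ : 0 < c₂) :
    ∃ C₁ C₂ : ℝ, 0 < C₁ ∧ 0 < C₂ ∧
      ∀ (V : Type) (_ : Fintype V) (_ : DecidableEq V) (_ : Nonempty V)
        (G : SimpleGraph V) (_ : DecidableRel G.Adj),
        (∀ v : V, G.degree v ≤ Δ) →
        ∀ β : ℝ, 0 ≤ β → ∀ h : V → V → Bool → Bool → ℝ,
        (∀ i j a b', h i j a b' = h i j b' a) → (∀ i j, h i j = h j i) →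
        ∀ P : Config V → Config V → ℝ, IsLocalMC G P →
        (∀ (t : ℕ) (ν₀ : Config V → ℝ), IsDist ν₀ →
          ∑ x' : Config V,
              |(∑ x : Config V, ν₀ x * (Matrix.of P ^ t) x x') - gibbs (ham G β h) x'| ≤
            c₁ * (Fintype.card V : ℝ) * (1 - c₂ / (Fintype.card V : ℝ)) ^ t) →
        ∀ B Λ : Finset V, B ⊆ Λ → B.card ≤ b →
        ∀ f : Config V → ℝ, SupportedOn f ↑B →
        ∀ r : ℕ, (∀ i ∈ B, ∀ j ∉ Λ, (r : ℕ∞) ≤ G.edist i j) →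
        sSup (mcVals G P Λ f) - sInf (mcVals G P Λ f) ≤
          C₁ * (Fintype.card V : ℝ) * supNorm f * Real.exp (-C₂ * r) := by
  set K : ℝ := 2 * (Δ + 1) * Real.exp 3
  refine ⟨8 * Real.exp K + 2 * c₁, min (1 / 2) (c₂ / K), by positivity, by positivity, ?_⟩
  intro V _ _ _ G _ hdeg β _ h _ _ P hP hmix B Λ _ _ f hf r hr
  set n : ℝ := (Fintype.card V : ℝ)
  set F := supNorm f
  have hF : ∀ x, |f x| ≤ F := abs_le_supNorm f
  have hF0 : 0 ≤ F := supNorm_nonneg f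
  have hvals : ∀ v ∈ mcVals G P Λ f, |v - gibbs (ham G β h) ⬝ᵥ f| ≤
      4 * Real.exp K * F * (n * Real.exp (-(r / 2))) ^ 2 +
        c₁ * n * F * Real.exp (-(c₂ / K) * r) := by
    rintro _ ⟨ν, hν, rfl⟩
    exact abs_lexp_sub_dotProduct_le_exp hdeg hP hν hf hF hr hc₁ hc₂.le le_rfl hmix
  have htrivial : sSup (mcVals G P Λ f) - sInf (mcVals G P Λ f) ≤ 2 * F :=
    sSup_sub_sInf_le_two_mul (m := 0) hF0 <| by
      rintro _ ⟨ν, hν, rfl⟩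
      simpa using abs_lexp_le hν.1 hF
  have hmixed := sSup_sub_sInf_le_two_mul (by positivity) hvals
  refine (le_two_mul_add_of_le_two_mul_sq (by linarith [Real.one_le_exp (by positivity : 0 ≤ K)])
    hF0 (by positivity) (by positivity) htrivial hmixed).trans ?_
  calc _
      ≤ 2 * (4 * Real.exp K * F * (n * Real.exp (-min (1 / 2) (c₂ / K) * r)) +
          c₁ * n * F * Real.exp (-min (1 / 2) (c₂ / K) * r)) := by
        gcongr
        · nlinarith [min_le_left (1 / 2 : ℝ) (c₂ / K), (Nat.cast_nonneg r : (0 : ℝ) ≤ r)]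
        · exact min_le_right _ _
    _ = _ := by ring

/-- **convergence of the Markov-chain LP hierarchy.** For all `Δ > 1`,
`b ≥ 1`, `c₁, c₂ > 0` there are constants `C₁, C₂ > 0` (depending only on `Δ, b, c₁, c₂`)
such that: for any spin system on a graph `G` on `n` vertices of maximum degree `≤ Δ` with
Gibbs distribution `μ`, and any local Markov chain `P` with
`sup_{ν₀} ‖ν₀ P^t - μ‖₁ ≤ c₁ n (1 - c₂/n)^t`, for every `f` supported on `B` with
`|B| ≤ b` and every `Λ ⊇ B`,
`max LP_{Λ,MC}(f) - min LP_{Λ,MC}(f) ≤ C₁ n ‖f‖_∞ e^{-C₂ dist(B,Λᶜ)}`. -/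
theorem LPmc_convergence (Δ b : ℕ) (hΔ : 1 < Δ) (hb : 1 ≤ b)
    (c₁ c₂ : ℝ) (hc₁ : 0 < c₁) (hc₂ : 0 < c₂) :
    ∃ C₁ C₂ : ℝ, 0 < C₁ ∧ 0 < C₂ ∧
      ∀ (V : Type) (_ : Fintype V) (_ : DecidableEq V) (_ : Nonempty V)
        (G : SimpleGraph V) (_ : DecidableRel G.Adj),
        (∀ v : V, G.degree v ≤ Δ) →
        ∀ β : ℝ, 0 ≤ β → ∀ h : V → V → Bool → Bool → ℝ,
        (∀ i j a b', h i j a b' = h i j b' a) → (∀ i j, h i j = h j i) →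
        ∀ P : Config V → Config V → ℝ, IsLocalMC G P →
        (∀ (t : ℕ) (ν₀ : Config V → ℝ), IsDist ν₀ →
          ∑ x' : Config V,
              |(∑ x : Config V, ν₀ x * (Matrix.of P ^ t) x x') - gibbs (ham G β h) x'| ≤
            c₁ * (Fintype.card V : ℝ) * (1 - c₂ / (Fintype.card V : ℝ)) ^ t) →
        ∀ B Λ : Finset V, B ⊆ Λ → B.card ≤ b →
        ∀ f : Config V → ℝ, SupportedOn f ↑B →
        ∀ r : ℕ, (∀ i ∈ B, ∀ j ∉ Λ, (r : ℕ∞) ≤ G.edist i j) →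
        sSup (mcVals G P Λ f) - sInf (mcVals G P Λ f) ≤
          C₁ * (Fintype.card V : ℝ) * supNorm f * Real.exp (-C₂ * r) :=
  LPmc_convergence_general Δ b c₁ c₂ hc₁ hc₂

end GibbsLP
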